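/- For the rank-2 Hamiltonian H = Σᵢ (J_X XᵢXᵢ₊₁ + J_Y YᵢYᵢ₊₁ + h_X Xᵢ + h_Y Yᵢ + h_Z Zᵢ) with J_X, J_Y ≠ 0 and (h_X, h_Y) ≠ (0,0), any 1-support conserved quantity Q = Σᵢ (aᵢ Xᵢ + bᵢ Yᵢ + cᵢ Zᵢ) (with site-dependent real coefficients) commuting with H must be zero. -/

import Mathlib

open Complex
open scoped Classical

noncomputable def σx : Matrix (Fin 2) (Fin 2) ℂ := !![0, 1; 1, 0]
noncomputable def σy : Matrix (Fin 2) (Fin 2) ℂ := !![0, -I; I, 0]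
noncomputable def σz : Matrix (Fin 2) (Fin 2) ℂ := !![1, 0; 0, -1]

/-- The single-site operator `M` acting on site `i` of a spin-1/2 chain of `N` sites
(tensored with the identity on all other sites). -/
noncomputable def pauliAt (N : ℕ) (i : Fin N) (M : Matrix (Fin 2) (Fin 2) ℂ) :
    Matrix (Fin N → Fin 2) (Fin N → Fin 2) ℂ :=
  fun f g => M (f i) (g i) * if ∀ j, j ≠ i → f j = g j then 1 else 0

/-!
Write `Q = ∑ᵢ qᵢ` with `qᵢ = aᵢX + bᵢY + cᵢZ` acting on site `i`, and `H` as its two bond sums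
plus the uniform field `h = h_X X + h_Y Y + h_Z Z`. Single-site operators on different sites
commute, so `[Q, H]` is again a sum of one- and two-site operators, obtained from
`[a·σ, a'·σ] = 2i (a × a')·σ`. Take the matrix entry of `[Q, H]` between a basis state with
site `p` up and the state with site `p` flipped: only the bonds `(p-1, p)`, `(p, p+1)` and the
field at `p` contribute. Flipping the spin at `p - 1` reverses the sign of the `Z_{p-1}`
contributions, and the difference of the two entries is `4 (J_Y a_{p-1} - i J_X b_{p-1})`, so
all `aᵢ` and `bᵢ` vanish. The entry then reduces to `2 c_p (h_X - i h_Y)`, and `cᵢ = 0` too.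
-/

open Function

attribute [local instance] LieRing.ofAssociativeRing

theorem Ring.lie_mul {R : Type*} [Ring R] (a b c : R) :
    ⁅a, b * c⁆ = ⁅a, b⁆ * c + b * ⁅a, c⁆ := by
  simp only [Ring.lie_def]; noncomm_ring

lemma Complex.ofReal_sub_ofReal_mul_I_eq_zero {x y : ℝ} :
    (x : ℂ) - y * I = 0 ↔ x = 0 ∧ y = 0 := by
  simp [Complex.ext_iff]

noncomputable def pauliComb (a b c : ℂ) : Matrix (Fin 2) (Fin 2) ℂ := a • σx + b • σy + c • σz

lemma pauliComb_eq (a b c : ℂ) : pauliComb a b c = !![c, a - b * I; a + b * I, -c] := by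
  ext i j; fin_cases i <;> fin_cases j <;> simp [pauliComb, σx, σy, σz]
  ring

lemma σx_eq_pauliComb : σx = pauliComb 1 0 0 := by simp [pauliComb]

lemma σy_eq_pauliComb : σy = pauliComb 0 1 0 := by simp [pauliComb]

lemma pauliComb_apply_self (a b c : ℂ) (u : Fin 2) : pauliComb a b c u u = σz u u * c := by
  fin_cases u <;> simp [pauliComb_eq, σz]

lemma pauliComb_apply_zero_one (a b c : ℂ) : pauliComb a b c 0 1 = a - b * I := by
  simp [pauliComb_eq]

-- `[a·σ, a'·σ] = 2i (a × a')·σ`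
lemma pauliComb_lie_pauliComb (a b c a' b' c' : ℂ) :
    ⁅pauliComb a b c, pauliComb a' b' c'⁆ =
      pauliComb (2 * I * (b * c' - c * b')) (2 * I * (c * a' - a * c'))
        (2 * I * (a * b' - b * a')) := by
  rw [Ring.lie_def, pauliComb_eq, pauliComb_eq, pauliComb_eq]
  ext i j
  fin_cases i <;> fin_cases j <;> simp <;> ring_nf <;> simp only [I_sq] <;> ring

section SiteOperators

variable {N : ℕ}

lemma pauliAt_add (i : Fin N) (A B : Matrix (Fin 2) (Fin 2) ℂ) :
    pauliAt N i (A + B) = pauliAt N i A + pauliAt N i B := by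
  ext f g; simp only [pauliAt, Matrix.add_apply, add_mul]

lemma pauliAt_sub (i : Fin N) (A B : Matrix (Fin 2) (Fin 2) ℂ) :
    pauliAt N i (A - B) = pauliAt N i A - pauliAt N i B := by
  ext f g; simp only [pauliAt, Matrix.sub_apply, sub_mul]

lemma pauliAt_smul (i : Fin N) (z : ℂ) (A : Matrix (Fin 2) (Fin 2) ℂ) :
    pauliAt N i (z • A) = z • pauliAt N i A := by
  ext f g; simp only [pauliAt, Matrix.smul_apply, smul_eq_mul, mul_assoc]

lemma pauliAt_mul_apply (i : Fin N) (A : Matrix (Fin 2) (Fin 2) ℂ)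
    (T : Matrix (Fin N → Fin 2) (Fin N → Fin 2) ℂ) (f g : Fin N → Fin 2) :
    (pauliAt N i A * T) f g = ∑ w, A (f i) w * T (update f i w) g := by
  rw [Matrix.mul_apply, ← Finset.sum_fiberwise Finset.univ (fun h => h i)]
  refine Finset.sum_congr rfl fun w _ => ?_
  rw [Finset.sum_eq_single_of_mem (update f i w) (by simp)]
  · rw [pauliAt, update_self, if_pos fun j hj => (update_of_ne hj _ _).symm, mul_one]
  · intro h hh hne
    obtain rfl : h i = w := (Finset.mem_filter.mp hh).2
    have hoff : ¬ ∀ j, j ≠ i → f j = h j := fun H =>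
      hne (update_eq_iff.mpr ⟨rfl, H⟩).symm
    simp [pauliAt, hoff]

lemma pauliAt_mul_pauliAt (i : Fin N) (A B : Matrix (Fin 2) (Fin 2) ℂ) :
    pauliAt N i A * pauliAt N i B = pauliAt N i (A * B) := by
  ext f g
  have hagree : ∀ w, (∀ j, j ≠ i → update f i w j = g j) ↔ ∀ j, j ≠ i → f j = g j :=
    fun w => forall₂_congr fun j hj => by rw [update_of_ne hj]
  rw [pauliAt_mul_apply]
  simp only [pauliAt, update_self, hagree, Matrix.mul_apply, Finset.sum_mul, mul_assoc]

lemma pauliAt_mul_pauliAt_apply {i j : Fin N} (hij : i ≠ j) (A B : Matrix (Fin 2) (Fin 2) ℂ)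
    (f g : Fin N → Fin 2) :
    (pauliAt N i A * pauliAt N j B) f g =
      A (f i) (g i) * B (f j) (g j) * if ∀ k, k ≠ i → k ≠ j → f k = g k then 1 else 0 := by
  have hagree : ∀ w, (∀ k, k ≠ j → update f i w k = g k) ↔
      w = g i ∧ ∀ k, k ≠ i → k ≠ j → f k = g k := by
    intro w
    constructor
    · intro H
      refine ⟨by simpa using H i hij, fun k hki hkj => ?_⟩
      rw [← H k hkj, update_of_ne hki]
    · rintro ⟨rfl, H⟩ k hkj
      by_cases hki : k = i
      · subst hki; simp
      · rw [update_of_ne hki]; exact H k hki hkj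
  rw [pauliAt_mul_apply, Fintype.sum_eq_single (g i)]
  · simp only [pauliAt, update_of_ne hij.symm, hagree, true_and, mul_assoc]
  · intro w hw
    simp [pauliAt, hagree, hw]

lemma pauliAt_commute {i j : Fin N} (hij : i ≠ j) (A B : Matrix (Fin 2) (Fin 2) ℂ) :
    Commute (pauliAt N i A) (pauliAt N j B) := by
  ext f g
  rw [pauliAt_mul_pauliAt_apply hij, pauliAt_mul_pauliAt_apply hij.symm, mul_comm (A _ _)]
  simp only [Imp.swap (a := _ ≠ i)]

lemma eq_update_off_iff {p i j : Fin N} {f : Fin N → Fin 2} {w : Fin 2} (hw : f p ≠ w) :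
    (∀ k, k ≠ i → k ≠ j → f k = update f p w k) ↔ p = i ∨ p = j := by
  constructor
  · intro H
    by_contra! hp
    exact hw (by simpa using H p hp.1 hp.2)
  · rintro hp k hki hkj
    have hkp : k ≠ p := by rcases hp with rfl | rfl <;> assumption
    rw [update_of_ne hkp]

lemma pauliAt_apply_update {p i : Fin N} {f : Fin N → Fin 2} {w : Fin 2} (hw : f p ≠ w)
    (M : Matrix (Fin 2) (Fin 2) ℂ) :
    pauliAt N i M f (update f p w) = if p = i then M (f p) w else 0 := by
  have hoff : (∀ k, k ≠ i → f k = update f p w k) ↔ p = i := by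
    simpa using eq_update_off_iff (i := i) (j := i) hw
  rw [pauliAt, if_congr hoff rfl rfl]
  split_ifs with hp
  · subst hp; simp
  · simp

lemma pauliAt_mul_pauliAt_apply_update {p i j : Fin N} (hij : i ≠ j) {f : Fin N → Fin 2}
    {w : Fin 2} (hw : f p ≠ w) (A B : Matrix (Fin 2) (Fin 2) ℂ) :
    (pauliAt N i A * pauliAt N j B) f (update f p w) =
      if p = i then A (f p) w * B (f j) (f j)
      else if p = j then A (f i) (f i) * B (f p) w else 0 := by
  rw [pauliAt_mul_pauliAt_apply hij, if_congr (eq_update_off_iff hw) rfl rfl]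
  by_cases hi : p = i
  · subst hi; simp [update_of_ne hij.symm]
  by_cases hj : p = j
  · subst hj; simp [hi, update_of_ne hij]
  · simp [hi, hj]

lemma pauliAt_lie_pauliAt (i : Fin N) (A B : Matrix (Fin 2) (Fin 2) ℂ) :
    ⁅pauliAt N i A, pauliAt N i B⁆ = pauliAt N i ⁅A, B⁆ := by
  rw [Ring.lie_def, Ring.lie_def, pauliAt_mul_pauliAt, pauliAt_mul_pauliAt, pauliAt_sub]

end SiteOperators

section ChainOperators

variable {N : ℕ}

noncomputable def siteSum (q : Fin N → Matrix (Fin 2) (Fin 2) ℂ) :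
    Matrix (Fin N → Fin 2) (Fin N → Fin 2) ℂ :=
  ∑ i, pauliAt N i (q i)

noncomputable def bondSum [NeZero N] (A B : Fin N → Matrix (Fin 2) (Fin 2) ℂ) :
    Matrix (Fin N → Fin 2) (Fin N → Fin 2) ℂ :=
  ∑ i, pauliAt N i (A i) * pauliAt N (i + 1) (B i)

lemma siteSum_lie_pauliAt (q : Fin N → Matrix (Fin 2) (Fin 2) ℂ) (j : Fin N)
    (A : Matrix (Fin 2) (Fin 2) ℂ) : ⁅siteSum q, pauliAt N j A⁆ = pauliAt N j ⁅q j, A⁆ := by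
  rw [siteSum, sum_lie, Fintype.sum_eq_single j fun i hij => (pauliAt_commute hij _ _).lie_eq,
    pauliAt_lie_pauliAt]

lemma siteSum_lie_siteSum (q r : Fin N → Matrix (Fin 2) (Fin 2) ℂ) :
    ⁅siteSum q, siteSum r⁆ = siteSum fun i => ⁅q i, r i⁆ := by
  change ⁅siteSum q, ∑ i, pauliAt N i (r i)⁆ = _
  simp only [lie_sum, siteSum_lie_pauliAt]
  rfl

lemma siteSum_lie_bondSum [NeZero N] (q A B : Fin N → Matrix (Fin 2) (Fin 2) ℂ) :
    ⁅siteSum q, bondSum A B⁆ =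
      bondSum (fun i => ⁅q i, A i⁆) B + bondSum A (fun i => ⁅q (i + 1), B i⁆) := by
  simp only [bondSum, lie_sum, Ring.lie_mul, siteSum_lie_pauliAt, Finset.sum_add_distrib]

lemma siteSum_apply_update (q : Fin N → Matrix (Fin 2) (Fin 2) ℂ) {p : Fin N}
    {f : Fin N → Fin 2} {w : Fin 2} (hw : f p ≠ w) :
    siteSum q f (update f p w) = q p (f p) w := by
  simp [siteSum, Matrix.sum_apply, pauliAt_apply_update hw]

lemma bondSum_apply_update [NeZero N] (hN : 1 < N) (A B : Fin N → Matrix (Fin 2) (Fin 2) ℂ)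
    {p : Fin N} {f : Fin N → Fin 2} {w : Fin 2} (hw : f p ≠ w) :
    bondSum A B f (update f p w) =
      A (p - 1) (f (p - 1)) (f (p - 1)) * B (p - 1) (f p) w
        + A p (f p) w * B p (f (p + 1)) (f (p + 1)) := by
  have hne : ∀ i : Fin N, i ≠ i + 1 := fun i h => by
    rw [left_eq_add, Fin.one_eq_zero_iff] at h; omega
  have hpred : p - 1 ≠ p := fun h => hne (p - 1) (by rw [sub_add_cancel, h])
  rw [bondSum, Matrix.sum_apply, Fintype.sum_eq_add (p - 1) p hpred]
  · rw [pauliAt_mul_pauliAt_apply_update (hne _) hw, pauliAt_mul_pauliAt_apply_update (hne _) hw,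
      sub_add_cancel, if_neg hpred.symm, if_pos rfl, if_pos rfl]
  · rintro i ⟨hi, hip⟩
    have hip' : p ≠ i + 1 := fun h => hi (by rw [h, add_sub_cancel_right])
    rw [pauliAt_mul_pauliAt_apply_update (hne _) hw, if_neg (Ne.symm hip), if_neg hip']

end ChainOperators

noncomputable def chainHamiltonian (N : ℕ) [NeZero N] (JX JY : ℂ) (h : Matrix (Fin 2) (Fin 2) ℂ) :
    Matrix (Fin N → Fin 2) (Fin N → Fin 2) ℂ :=
  JX • bondSum (fun _ => σx) (fun _ => σx) + JY • bondSum (fun _ => σy) (fun _ => σy)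
    + siteSum fun _ => h

section Hamiltonian

variable {N : ℕ} [NeZero N]

lemma siteSum_lie_bondSum_apply_update (hN : 1 < N) (q : Fin N → Matrix (Fin 2) (Fin 2) ℂ)
    {A : Matrix (Fin 2) (Fin 2) ℂ} (hA : ∀ u, A u u = 0) {p : Fin N} {f : Fin N → Fin 2}
    {w : Fin 2} (hw : f p ≠ w) :
    ⁅siteSum q, bondSum (fun _ => A) (fun _ => A)⁆ f (update f p w) =
      A (f p) w * (⁅q (p - 1), A⁆ (f (p - 1)) (f (p - 1))
        + ⁅q (p + 1), A⁆ (f (p + 1)) (f (p + 1))) := by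
  rw [siteSum_lie_bondSum, Matrix.add_apply, bondSum_apply_update hN _ _ hw,
    bondSum_apply_update hN _ _ hw, sub_add_cancel]
  simp only [hA]
  ring

lemma siteSum_lie_chainHamiltonian_apply_update (hN : 1 < N) (a b c : Fin N → ℂ)
    (JX JY hX hY hZ : ℂ) {p : Fin N} {f : Fin N → Fin 2} (hfp : f p = 0) :
    ⁅siteSum (fun i => pauliComb (a i) (b i) (c i)),
        chainHamiltonian N JX JY (pauliComb hX hY hZ)⁆ f (update f p 1) =
      2 * (JY * (a (p - 1) * σz (f (p - 1)) (f (p - 1)) + a (p + 1) * σz (f (p + 1)) (f (p + 1)))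
          + c p * hX - a p * hZ)
        - 2 * I * (JX * (b (p - 1) * σz (f (p - 1)) (f (p - 1))
          + b (p + 1) * σz (f (p + 1)) (f (p + 1))) - b p * hZ + c p * hY) := by
  have hw : f p ≠ 1 := by rw [hfp]; decide
  have hσx : ∀ u, σx u u = 0 := fun u => by simp [σx_eq_pauliComb, pauliComb_apply_self]
  have hσy : ∀ u, σy u u = 0 := fun u => by simp [σy_eq_pauliComb, pauliComb_apply_self]
  rw [chainHamiltonian, lie_add, lie_add, lie_smul, lie_smul, Matrix.add_apply, Matrix.add_apply,
    Matrix.smul_apply, Matrix.smul_apply, siteSum_lie_bondSum_apply_update hN _ hσx hw,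
    siteSum_lie_bondSum_apply_update hN _ hσy hw, siteSum_lie_siteSum, siteSum_apply_update _ hw,
    hfp, σx_eq_pauliComb, σy_eq_pauliComb]
  simp only [pauliComb_lie_pauliComb, pauliComb_apply_self, pauliComb_apply_zero_one, smul_eq_mul]
  ring_nf
  simp only [I_sq]
  ring

lemma siteSum_lie_chainHamiltonian_apply_flip (hN : 2 < N) (a b c : Fin N → ℂ)
    (JX JY hX hY hZ : ℂ) (p : Fin N) (u : Fin 2) :
    ⁅siteSum (fun i => pauliComb (a i) (b i) (c i)),
        chainHamiltonian N JX JY (pauliComb hX hY hZ)⁆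
      (update 0 (p - 1) u) (update (update 0 (p - 1) u) p 1) =
      2 * (JY * (a (p - 1) * σz u u + a (p + 1)) + c p * hX - a p * hZ)
        - 2 * I * (JX * (b (p - 1) * σz u u + b (p + 1)) - b p * hZ + c p * hY) := by
  have hpred : p - 1 ≠ p := by
    rw [Ne, sub_eq_self, Fin.one_eq_zero_iff]; omega
  have hsucc : p + 1 ≠ p - 1 := by
    intro h
    have h2 : (1 : Fin N) + 1 = 0 := by
      calc (1 : Fin N) + 1 = (p + 1) - (p - 1) := by abel
        _ = 0 := by rw [h, sub_self]
    rw [Fin.ext_iff, Fin.val_add, Fin.val_one', Fin.val_zero, Nat.mod_eq_of_lt (by omega : 1 < N),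
      Nat.mod_eq_of_lt (by omega : 2 < N)] at h2
    omega
  rw [siteSum_lie_chainHamiltonian_apply_update (by omega) _ _ _ _ _ _ _ _
      (update_of_ne hpred.symm _ _), update_self, update_of_ne hsucc]
  simp [σz]

variable {a b c : Fin N → ℝ} {JX JY hX hY hZ : ℝ}

lemma xy_coeffs_eq_zero_of_lie_eq_zero (hN : 2 < N) (hJX : JX ≠ 0) (hJY : JY ≠ 0)
    (hlie : ⁅siteSum fun i => pauliComb (a i) (b i) (c i),
      chainHamiltonian N JX JY (pauliComb hX hY hZ)⁆ = 0) (p : Fin N) :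
    a p = 0 ∧ b p = 0 := by
  have entry := fun u => (siteSum_lie_chainHamiltonian_apply_flip hN _ _ _ _ _ _ _ _ (p + 1) u).symm
    |>.trans (by rw [hlie, Matrix.zero_apply])
  have e0 := entry 0
  have e1 := entry 1
  have hz0 : σz 0 0 = 1 := by simp [σz]
  have hz1 : σz 1 1 = -1 := by simp [σz]
  rw [add_sub_cancel_right, hz0] at e0
  rw [add_sub_cancel_right, hz1] at e1
  have h : ((4 * JY * a p : ℝ) : ℂ) - ((4 * JX * b p : ℝ) : ℂ) * I = 0 := by
    push_cast
    linear_combination e0 - e1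
  obtain ⟨ha, hb⟩ := Complex.ofReal_sub_ofReal_mul_I_eq_zero.mp h
  exact ⟨by simpa [hJY] using ha, by simpa [hJX] using hb⟩

lemma z_coeffs_eq_zero_of_lie_eq_zero (hN : 2 < N) (hfield : (hX, hY) ≠ (0, 0))
    (hlie : ⁅siteSum fun i => pauliComb (a i) (b i) (c i),
      chainHamiltonian N JX JY (pauliComb hX hY hZ)⁆ = 0)
    (hab : ∀ p, a p = 0 ∧ b p = 0) (p : Fin N) : c p = 0 := by
  have e := (siteSum_lie_chainHamiltonian_apply_flip hN _ _ _ _ _ _ _ _ p 0).symm.trans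
    (by rw [hlie, Matrix.zero_apply])
  simp only [(hab _).1, (hab _).2, Complex.ofReal_zero, zero_mul, mul_zero, add_zero, zero_add,
    sub_zero] at e
  have h : ((2 * c p * hX : ℝ) : ℂ) - ((2 * c p * hY : ℝ) : ℂ) * I = 0 := by
    push_cast
    linear_combination e
  obtain ⟨hcX, hcY⟩ := Complex.ofReal_sub_ofReal_mul_I_eq_zero.mp h
  by_contra hc
  exact hfield (by simp_all)

end Hamiltonian

theorem rank2_no_one_support_conserved
    (N : ℕ) [NeZero N] (hN : 3 ≤ N) (JX JY hX hY hZ : ℝ)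
    (hJX : JX ≠ 0) (hJY : JY ≠ 0) (hfield : (hX, hY) ≠ (0, 0))
    (a b c : Fin N → ℝ)
    (H : Matrix (Fin N → Fin 2) (Fin N → Fin 2) ℂ)
    (hH : H = ∑ i : Fin N,
      ((JX : ℂ) • (pauliAt N i σx * pauliAt N (i + 1) σx)
        + (JY : ℂ) • (pauliAt N i σy * pauliAt N (i + 1) σy)
        + (hX : ℂ) • pauliAt N i σx + (hY : ℂ) • pauliAt N i σy
        + (hZ : ℂ) • pauliAt N i σz))
    (Q : Matrix (Fin N → Fin 2) (Fin N → Fin 2) ℂ)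
    (hQ : Q = ∑ i : Fin N,
      ((a i : ℂ) • pauliAt N i σx + (b i : ℂ) • pauliAt N i σy
        + (c i : ℂ) • pauliAt N i σz))
    (hcomm : Q * H = H * Q) :
    ∀ i : Fin N, a i = 0 ∧ b i = 0 ∧ c i = 0 := by
  have hQ' : Q = siteSum fun i => pauliComb (a i) (b i) (c i) := by
    simp only [hQ, siteSum, pauliComb, pauliAt_add, pauliAt_smul]
  have hH' : H = chainHamiltonian N JX JY (pauliComb hX hY hZ) := by
    simp only [hH, chainHamiltonian, bondSum, siteSum, pauliComb, pauliAt_add, pauliAt_smul,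
      Finset.smul_sum, Finset.sum_add_distrib, add_assoc]
  have hlie : ⁅siteSum fun i => pauliComb (a i) (b i) (c i),
      chainHamiltonian N JX JY (pauliComb hX hY hZ)⁆ = 0 := by
    rw [← hQ', ← hH', Ring.lie_def, hcomm, sub_self]
  have hab := xy_coeffs_eq_zero_of_lie_eq_zero (by omega) hJX hJY hlie
  intro p
  exact ⟨(hab p).1, (hab p).2, z_coeffs_eq_zero_of_lie_eq_zero (by omega) hfield hlie hab p⟩
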